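/- Let X be a finite connected simple graph with m edges (m ≥ 1), let p_G(x) = det(xI − A(G)) denote the characteristic polynomial of the adjacency matrix of a graph G, and let X'' be the Kronecker double cover of X. Then p_{γ(X)}(x) · p_{L(X)}(−x) = (−1)^m · p_{L(X'')}(−x) · p_{L(X)}(x) as an identity of polynomials. -/

import Mathlib

open SimpleGraph Polynomial

/-- The symmetric edge graph `γ(X)` of a simple graph `X`: its vertices are the darts
(ordered pairs of adjacent vertices) of `X`, and two darts `(u,v)` and `(u',v')` are adjacent
iff (`v = u'` and `u ≠ v'`) or (`v' = u` and `u' ≠ v`). -/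
def symEdgeGraph {V : Type*} (X : SimpleGraph V) : SimpleGraph X.Dart where
  Adj d d' := (d.snd = d'.fst ∧ d.fst ≠ d'.snd) ∨ (d'.snd = d.fst ∧ d'.fst ≠ d.snd)
  symm := ⟨fun d d' h => Or.symm h⟩
  loopless := ⟨by
    rintro d (⟨h1, -⟩ | ⟨h1, -⟩) <;> exact X.loopless.1 d.fst (h1 ▸ d.adj)⟩

/-- The Kronecker double cover `X''` of a simple graph `X`: the tensor product `X × K₂`.
Its vertices are pairs `(v, i)` with `v` a vertex of `X` and `i : Bool`, and `(v, i)` is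
adjacent to `(w, j)` iff `v` is adjacent to `w` in `X` and `i ≠ j`. -/
def kroneckerCover {V : Type*} (X : SimpleGraph V) : SimpleGraph (V × Bool) where
  Adj a b := X.Adj a.1 b.1 ∧ a.2 ≠ b.2
  symm := ⟨fun _ _ h => ⟨h.1.symm, h.2.symm⟩⟩
  loopless := ⟨fun _ h => h.2 rfl⟩

instance {V : Type*} [Finite V] (G : SimpleGraph V) : Finite G.Dart :=
  Finite.of_injective _ SimpleGraph.Dart.toProd_injective

/-- The characteristic polynomial `p_G(x) = det(x·I − A(G))` of the adjacency matrix of a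
finite simple graph `G`. -/
noncomputable def adjCharpoly {V : Type*} [Finite V] (G : SimpleGraph V) : Polynomial ℝ := by
  letI := Fintype.ofFinite V
  classical
  exact (G.adjMatrix ℝ).charpoly

/- ### Auxiliary lemmas -/

lemma adjCharpoly_eq {W : Type*} [Fintype W] [DecidableEq W] (G : SimpleGraph W)
    [DecidableRel G.Adj] : adjCharpoly G = (G.adjMatrix ℝ).charpoly := by
  unfold adjCharpoly
  congr!

open Matrix in
lemma det_fromBlocks_comm {n R : Type*} [DecidableEq n] [Fintype n] [CommRing R]
    (A B : Matrix n n R) :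
    (Matrix.fromBlocks A B B A).det = (A + B).det * (A - B).det := by
  have h : Matrix.fromBlocks A B B A =
      Matrix.fromBlocks 1 1 0 1 *
        (Matrix.fromBlocks (A - B) 0 B (A + B) * Matrix.fromBlocks 1 (-1) 0 1) := by
    simp [Matrix.fromBlocks_multiply, Matrix.fromBlocks_inj]
  rw [h, det_mul, det_mul, det_fromBlocks_zero₂₁, det_fromBlocks_zero₂₁,
    det_fromBlocks_zero₁₂]
  simp [mul_comm]

open Matrix in
lemma charpoly_fromBlocks_comm {n R : Type*} [DecidableEq n] [Fintype n] [CommRing R]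
    (P Q : Matrix n n R) :
    (Matrix.fromBlocks P Q Q P).charpoly = (P + Q).charpoly * (P - Q).charpoly := by
  have h1 : charmatrix P + -(Q.map (C : R →+* R[X])) = charmatrix (P + Q) := by
    unfold charmatrix
    rw [RingHom.mapMatrix_apply, RingHom.mapMatrix_apply,
      Matrix.map_add _ (map_add (C : R →+* R[X]))]
    abel
  have h2 : charmatrix P - -(Q.map (C : R →+* R[X])) = charmatrix (P - Q) := by
    unfold charmatrix
    rw [RingHom.mapMatrix_apply, RingHom.mapMatrix_apply,
      Matrix.map_sub _ (map_sub (C : R →+* R[X]))]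
    abel
  rw [Matrix.charpoly, Matrix.charmatrix_fromBlocks, det_fromBlocks_comm, h1, h2]
  rfl

open Matrix in
lemma charpoly_comp_neg_X {n : Type*} [DecidableEq n] [Fintype n]
    (W : Matrix n n ℝ) :
    (W.charpoly).comp (-Polynomial.X) = (-1) ^ (Fintype.card n) * (-W).charpoly := by
  have hφ : ∀ p : Polynomial ℝ,
      (Polynomial.eval₂RingHom (C : ℝ →+* Polynomial ℝ) (-X)) p = p.comp (-X) := by
    intro p; rw [Polynomial.coe_eval₂RingHom]; rfl
  rw [← hφ, Matrix.charpoly, RingHom.map_det, RingHom.mapMatrix_apply]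
  have hmap : (charmatrix W).map (Polynomial.eval₂RingHom (C : ℝ →+* Polynomial ℝ) (-X)) =
      -(charmatrix (-W)) := by
    ext i j
    by_cases hij : i = j
    · subst hij
      simp [charmatrix_apply_eq]
      ring
    · simp [charmatrix_apply_ne _ _ _ hij]
  rw [hmap, Matrix.det_neg, Matrix.charpoly]

section graphs
variable {V : Type*} (X : SimpleGraph V)

lemma dart_eq_symm_iff (d d' : X.Dart) :
    d = d'.symm ↔ (d.fst = d'.snd ∧ d.snd = d'.fst) := by
  rw [SimpleGraph.Dart.ext_iff, Prod.ext_iff]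
  constructor <;> exact fun h => ⟨h.1, h.2⟩

lemma dart_eq_iff (d d' : X.Dart) :
    d = d' ↔ (d.fst = d'.fst ∧ d.snd = d'.snd) := by
  rw [SimpleGraph.Dart.ext_iff, Prod.ext_iff]

/-- The edge of the Kronecker cover associated to a dart. -/
def dartKCEdge (d : X.Dart) : (kroneckerCover X).edgeSet :=
  ⟨s((d.fst, false), (d.snd, true)), by
    rw [SimpleGraph.mem_edgeSet]
    exact ⟨d.adj, by simp⟩⟩

lemma dartKCEdge_injective : Function.Injective (dartKCEdge X) := by
  rintro d d' h
  simp only [dartKCEdge, Subtype.mk.injEq, Sym2.eq_iff, Prod.mk.injEq] at h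
  rcases h with ⟨⟨h1, -⟩, h2, -⟩ | ⟨⟨-, h⟩, -⟩
  · exact SimpleGraph.Dart.ext _ _ (Prod.ext h1 h2)
  · exact absurd h (by simp)

lemma dartKCEdge_surjective : Function.Surjective (dartKCEdge X) := by
  rintro ⟨e, he⟩
  induction e with
  | _ p q =>
    rw [SimpleGraph.mem_edgeSet] at he
    obtain ⟨hadj, hne⟩ := he
    rcases p with ⟨u, bu⟩
    rcases q with ⟨v, bv⟩
    simp only at hadj hne
    match bu, bv, hne with
    | false, true, _ =>
      exact ⟨⟨(u, v), hadj⟩, rfl⟩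
    | true, false, _ =>
      exact ⟨⟨(v, u), hadj.symm⟩, Subtype.ext (Sym2.eq_swap)⟩

lemma lineGraph_kc_adj (d d' : X.Dart) :
    (kroneckerCover X).lineGraph.Adj (dartKCEdge X d) (dartKCEdge X d')
      ↔ (d.fst = d'.fst ∨ d.snd = d'.snd) ∧ d ≠ d' := by
  rw [SimpleGraph.lineGraph_adj_iff_exists]
  constructor
  · rintro ⟨hne, v, hv1, hv2⟩
    refine ⟨?_, fun h => hne (by rw [h])⟩
    simp only [dartKCEdge, Sym2.mem_iff] at hv1 hv2
    rcases hv1 with h1 | h1 <;> rcases hv2 with h2 | h2 <;> rw [h1] at h2 <;>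
      rw [Prod.ext_iff] at h2
    · exact Or.inl h2.1
    · exact absurd h2.2 (by simp)
    · exact absurd h2.2 (by simp)
    · exact Or.inr h2.1
  · rintro ⟨h, hne⟩
    refine ⟨fun hc => hne (dartKCEdge_injective X hc), ?_⟩
    rcases h with h | h
    · exact ⟨(d.fst, false), by simp [dartKCEdge], by simp [dartKCEdge, h]⟩
    · exact ⟨(d.snd, true), by simp [dartKCEdge], by simp [dartKCEdge, h]⟩

lemma kc_adj_symm_symm (d d' : X.Dart) :
    (kroneckerCover X).lineGraph.Adj (dartKCEdge X d.symm) (dartKCEdge X d'.symm)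
      ↔ (kroneckerCover X).lineGraph.Adj (dartKCEdge X d) (dartKCEdge X d') := by
  rw [lineGraph_kc_adj, lineGraph_kc_adj]
  have : d.symm ≠ d'.symm ↔ d ≠ d' :=
    (SimpleGraph.Dart.symm_involutive.injective.ne_iff)
  rw [this]
  constructor <;> exact fun ⟨h, h2⟩ => ⟨h.symm.imp id id, h2⟩

lemma kc_adj_symm_left (d d' : X.Dart) :
    (kroneckerCover X).lineGraph.Adj (dartKCEdge X d.symm) (dartKCEdge X d')
      ↔ (kroneckerCover X).lineGraph.Adj (dartKCEdge X d) (dartKCEdge X d'.symm) := by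
  rw [lineGraph_kc_adj, lineGraph_kc_adj]
  have : d.symm ≠ d' ↔ d ≠ d'.symm := by
    rw [ne_eq, ne_eq, SimpleGraph.Dart.symm_involutive.eq_iff]
  rw [this]
  constructor <;> exact fun ⟨h, h2⟩ => ⟨h.symm.imp id id, h2⟩

lemma symEdge_adj_iff (d d' : X.Dart) :
    (symEdgeGraph X).Adj d d' ↔
      (kroneckerCover X).lineGraph.Adj (dartKCEdge X d) (dartKCEdge X d'.symm) := by
  rw [lineGraph_kc_adj]
  have h1 : (d'.symm).fst = d'.snd := rfl
  have h2 : (d'.symm).snd = d'.fst := rfl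
  rw [h1, h2, ne_eq, dart_eq_symm_iff]
  show (d.snd = d'.fst ∧ d.fst ≠ d'.snd) ∨ (d'.snd = d.fst ∧ d'.fst ≠ d.snd) ↔ _
  constructor
  · rintro (⟨ha, hb⟩ | ⟨ha, hb⟩)
    · exact ⟨Or.inr ha, fun hc => hb hc.1⟩
    · exact ⟨Or.inl ha.symm, fun hc => hb (hc.2.symm)⟩
  · rintro ⟨ha | ha, hb⟩
    · exact Or.inr ⟨ha.symm, fun hd => hb ⟨ha, hd.symm⟩⟩
    · exact Or.inl ⟨ha, fun hd => hb ⟨hd, ha⟩⟩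
end graphs

lemma indicator_lemma {α : Type*} [DecidableEq α] (a b c f : α) (hab : a ≠ b) (hcf : c ≠ f) :
    (if (a = c ∨ b = f) ∧ ¬(a = c ∧ b = f) then (1:ℝ) else 0) +
      (if (a = f ∨ b = c) ∧ ¬(a = f ∧ b = c) then (1:ℝ) else 0) =
      if ¬((a = c ∧ b = f) ∨ (a = f ∧ b = c)) ∧ (a = c ∨ a = f ∨ b = c ∨ b = f)
        then (1:ℝ) else 0 := by
  by_cases h1 : a = c <;> by_cases h2 : a = f <;> by_cases h3 : b = c <;>
    by_cases h4 : b = f <;> simp_all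

lemma mem_dart_edge {V : Type*} {X : SimpleGraph V} {d : X.Dart} {v : V} :
    v ∈ d.edge ↔ v = d.fst ∨ v = d.snd := by
  rcases d with ⟨⟨a, b⟩, h⟩
  exact Sym2.mem_iff

lemma entry_sum {V : Type*} (X : SimpleGraph V) [DecidableEq V]
    [DecidableRel (kroneckerCover X).lineGraph.Adj] [DecidableRel X.lineGraph.Adj]
    (s : X.edgeSet → X.Dart) (hs : ∀ e, (s e).edge = (e : Sym2 V)) (e e' : X.edgeSet) :
    (kroneckerCover X).lineGraph.adjMatrix ℝ (dartKCEdge X (s e)) (dartKCEdge X (s e')) +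
      (kroneckerCover X).lineGraph.adjMatrix ℝ (dartKCEdge X (s e))
        (dartKCEdge X ((s e').symm)) =
      X.lineGraph.adjMatrix ℝ e e' := by
  classical
  simp only [SimpleGraph.adjMatrix_apply]
  have h1 := lineGraph_kc_adj X (s e) (s e')
  have h2 := lineGraph_kc_adj X (s e) ((s e').symm)
  rw [if_congr h1 rfl rfl, if_congr h2 rfl rfl]
  have hlg : X.lineGraph.Adj e e' ↔
      ¬((((s e).fst = (s e').fst) ∧ ((s e).snd = (s e').snd)) ∨
        (((s e).fst = (s e').snd) ∧ ((s e).snd = (s e').fst))) ∧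
      (((s e).fst = (s e').fst) ∨ ((s e).fst = (s e').snd) ∨
        ((s e).snd = (s e').fst) ∨ ((s e).snd = (s e').snd)) := by
    rw [SimpleGraph.lineGraph_adj_iff_exists]
    have hee : e ≠ e' ↔ ¬((((s e).fst = (s e').fst) ∧ ((s e).snd = (s e').snd)) ∨
        (((s e).fst = (s e').snd) ∧ ((s e).snd = (s e').fst))) := by
      rw [ne_eq, ← Subtype.coe_inj, ← hs e, ← hs e',
        SimpleGraph.dart_edge_eq_iff, dart_eq_iff, dart_eq_symm_iff]
    have hmem : ∀ v, (v ∈ (e : Sym2 V) ∧ v ∈ (e' : Sym2 V)) ↔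
        ((v = (s e).fst ∨ v = (s e).snd) ∧ (v = (s e').fst ∨ v = (s e').snd)) := by
      intro v
      rw [← hs e, ← hs e', mem_dart_edge, mem_dart_edge]
    rw [hee]
    constructor
    · rintro ⟨hne, v, hv⟩
      rw [hmem v] at hv
      refine ⟨hne, ?_⟩
      rcases hv with ⟨hv1 | hv1, hv2 | hv2⟩ <;> subst hv1
      · exact Or.inl hv2
      · exact Or.inr (Or.inl hv2)
      · exact Or.inr (Or.inr (Or.inl hv2))
      · exact Or.inr (Or.inr (Or.inr hv2))
    · rintro ⟨hne, hv⟩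
      refine ⟨hne, ?_⟩
      rcases hv with h | h | h | h
      · exact ⟨(s e).fst, (hmem _).mpr ⟨Or.inl rfl, Or.inl h⟩⟩
      · exact ⟨(s e).fst, (hmem _).mpr ⟨Or.inl rfl, Or.inr h⟩⟩
      · exact ⟨(s e).snd, (hmem _).mpr ⟨Or.inr rfl, Or.inl h⟩⟩
      · exact ⟨(s e).snd, (hmem _).mpr ⟨Or.inr rfl, Or.inr h⟩⟩
  rw [if_congr hlg rfl rfl]
  have hab : (s e).fst ≠ (s e).snd := SimpleGraph.Dart.fst_ne_snd _
  have hcf : (s e').fst ≠ (s e').snd := SimpleGraph.Dart.fst_ne_snd _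
  have heq1 : ((s e').symm).fst = (s e').snd := rfl
  have heq2 : ((s e').symm).snd = (s e').fst := rfl
  rw [heq1, heq2]
  simp only [ne_eq, dart_eq_iff, dart_eq_symm_iff]
  exact indicator_lemma _ _ _ _ hab hcf

/-- For a finite connected simple graph `X` with `m ≥ 1` edges,
`p_{γ(X)}(x) · p_{L(X)}(−x) = (−1)^m · p_{L(X'')}(−x) · p_{L(X)}(x)`
as an identity of polynomials. -/
theorem charpoly_symEdgeGraph_mul {V : Type*} [Finite V]
    (X : SimpleGraph V) (hconn : X.Connected) (m : ℕ) (hm : X.edgeSet.ncard = m)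
    (hm1 : 1 ≤ m) :
    adjCharpoly (symEdgeGraph X) * (adjCharpoly X.lineGraph).comp (-Polynomial.X) =
      (-1) ^ m * ((adjCharpoly (kroneckerCover X).lineGraph).comp (-Polynomial.X)) *
        adjCharpoly X.lineGraph := by
  classical
  letI : Fintype V := Fintype.ofFinite V
  letI : Fintype X.edgeSet := Fintype.ofFinite _
  letI : Fintype (kroneckerCover X).edgeSet := Fintype.ofFinite _
  letI : Fintype X.Dart := Fintype.ofFinite _
  have hcard : Fintype.card X.edgeSet = m := by
    rw [← hm, ← Nat.card_coe_set_eq, Nat.card_eq_fintype_card]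
  -- a section of Dart.edge
  have hex : ∀ e : X.edgeSet, ∃ d : X.Dart, d.edge = (e : Sym2 V) := by
    rintro ⟨e, he⟩
    induction e with
    | _ u v => exact ⟨⟨(u, v), he⟩, rfl⟩
  choose s hs using hex
  -- the bijection from E ⊕ E to darts
  set F : X.edgeSet ⊕ X.edgeSet → X.Dart :=
    Sum.elim (fun e => s e) (fun e => (s e).symm) with hF
  have hFinj : Function.Injective F := by
    rintro (e | e) (e' | e') h <;>
      simp only [hF, Sum.elim_inl, Sum.elim_inr] at h
    · have : (e : Sym2 V) = e' := by rw [← hs e, ← hs e', h]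
      exact congrArg Sum.inl (Subtype.ext this)
    · exfalso
      have he : (e : Sym2 V) = (e' : Sym2 V) := by
        rw [← hs e, ← hs e', h]
        exact SimpleGraph.Dart.edge_symm _
      have : e = e' := Subtype.ext he
      subst this
      exact SimpleGraph.Dart.symm_ne _ h.symm
    · exfalso
      have he : (e : Sym2 V) = (e' : Sym2 V) := by
        rw [← hs e, ← hs e', ← h]
        exact (SimpleGraph.Dart.edge_symm _).symm
      have : e = e' := Subtype.ext he
      subst this
      exact SimpleGraph.Dart.symm_ne _ h
    · have heq : s e = s e' := SimpleGraph.Dart.symm_involutive.injective h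
      have : (e : Sym2 V) = e' := by rw [← hs e, ← hs e', heq]
      have : e = e' := Subtype.ext this
      exact congrArg Sum.inr this
  have hFsurj : Function.Surjective F := by
    intro d
    rcases (SimpleGraph.dart_edge_eq_iff (s ⟨d.edge, d.edge_mem⟩) d).mp
        (hs ⟨d.edge, d.edge_mem⟩) with h | h
    · exact ⟨Sum.inl ⟨d.edge, d.edge_mem⟩, h⟩
    · refine ⟨Sum.inr ⟨d.edge, d.edge_mem⟩, ?_⟩
      show (s ⟨d.edge, d.edge_mem⟩).symm = d
      rw [h, SimpleGraph.Dart.symm_symm]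
  set χ₂ : (X.edgeSet ⊕ X.edgeSet) ≃ X.Dart := Equiv.ofBijective F ⟨hFinj, hFsurj⟩ with hχ₂
  have hεbij : Function.Bijective (dartKCEdge X) :=
    ⟨dartKCEdge_injective X, dartKCEdge_surjective X⟩
  set χ : (X.edgeSet ⊕ X.edgeSet) ≃ (kroneckerCover X).edgeSet :=
    Equiv.ofBijective (fun i => dartKCEdge X (F i)) (hεbij.comp ⟨hFinj, hFsurj⟩) with hχ
  set Madj := (kroneckerCover X).lineGraph.adjMatrix ℝ with hMadj
  set A : Matrix X.edgeSet X.edgeSet ℝ :=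
    Matrix.of fun e e' => Madj (dartKCEdge X (s e)) (dartKCEdge X (s e')) with hA
  set B : Matrix X.edgeSet X.edgeSet ℝ :=
    Matrix.of fun e e' => Madj (dartKCEdge X (s e)) (dartKCEdge X ((s e').symm)) with hB
  have hMss : ∀ d d' : X.Dart,
      Madj (dartKCEdge X d.symm) (dartKCEdge X d'.symm)
        = Madj (dartKCEdge X d) (dartKCEdge X d') := by
    intro d d'
    simp only [hMadj, SimpleGraph.adjMatrix_apply]
    exact if_congr (kc_adj_symm_symm X d d') rfl rfl
  have hMsl : ∀ d d' : X.Dart,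
      Madj (dartKCEdge X d.symm) (dartKCEdge X d')
        = Madj (dartKCEdge X d) (dartKCEdge X d'.symm) := by
    intro d d'
    simp only [hMadj, SimpleGraph.adjMatrix_apply]
    exact if_congr (kc_adj_symm_left X d d') rfl rfl
  have hNM : ∀ d d' : X.Dart, (symEdgeGraph X).adjMatrix ℝ d d'
      = Madj (dartKCEdge X d) (dartKCEdge X d'.symm) := by
    intro d d'
    simp only [hMadj, SimpleGraph.adjMatrix_apply]
    exact if_congr (symEdge_adj_iff X d d') rfl rfl
  -- the block structures
  have hMblock : Matrix.reindex χ.symm χ.symm Madj = Matrix.fromBlocks A B B A := by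
    ext i j
    rcases i with e | e <;> rcases j with e' | e' <;>
      simp only [Matrix.reindex_apply, Matrix.submatrix_apply, Equiv.symm_symm, hχ,
        Equiv.ofBijective_apply, hF, Sum.elim_inl, Sum.elim_inr,
        Matrix.fromBlocks_apply₁₁, Matrix.fromBlocks_apply₁₂,
        Matrix.fromBlocks_apply₂₁, Matrix.fromBlocks_apply₂₂, hA, hB, Matrix.of_apply]
    · exact hMsl (s e) (s e')
    · exact hMss (s e) (s e')
  have hNblock : Matrix.reindex χ₂.symm χ₂.symm ((symEdgeGraph X).adjMatrix ℝ)
      = Matrix.fromBlocks B A A B := by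
    ext i j
    rcases i with e | e <;> rcases j with e' | e' <;>
      simp only [Matrix.reindex_apply, Matrix.submatrix_apply, Equiv.symm_symm, hχ₂,
        Equiv.ofBijective_apply, hF, Sum.elim_inl, Sum.elim_inr,
        Matrix.fromBlocks_apply₁₁, Matrix.fromBlocks_apply₁₂,
        Matrix.fromBlocks_apply₂₁, Matrix.fromBlocks_apply₂₂, hA, hB, Matrix.of_apply]
    · exact hNM (s e) (s e')
    · have h0 := hNM (s e) ((s e').symm)
      rw [SimpleGraph.Dart.symm_symm] at h0
      exact h0
    · exact (hNM ((s e).symm) (s e')).trans (hMss (s e) (s e'))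
    · have h0 := hNM ((s e).symm) ((s e').symm)
      rw [SimpleGraph.Dart.symm_symm] at h0
      exact h0.trans (hMsl (s e) (s e'))
  -- A + B is the adjacency matrix of the line graph of X
  have hABL : A + B = X.lineGraph.adjMatrix ℝ := by
    ext e e'
    simp only [Matrix.add_apply, hA, hB, Matrix.of_apply, hMadj]
    exact entry_sum X s hs e e'
  -- assembling the characteristic polynomials
  have h1 : adjCharpoly (symEdgeGraph X) =
      (A + B).charpoly * (B - A).charpoly := by
    rw [adjCharpoly_eq, ← Matrix.charpoly_reindex χ₂.symm ((symEdgeGraph X).adjMatrix ℝ),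
      hNblock, charpoly_fromBlocks_comm, add_comm B A]
  have h2 : adjCharpoly (kroneckerCover X).lineGraph =
      (A + B).charpoly * (A - B).charpoly := by
    rw [adjCharpoly_eq, ← Matrix.charpoly_reindex χ.symm
      ((kroneckerCover X).lineGraph.adjMatrix ℝ), ← hMadj, hMblock, charpoly_fromBlocks_comm]
  have h3 : adjCharpoly X.lineGraph = (A + B).charpoly := by
    rw [adjCharpoly_eq, ← hABL]
  rw [h1, h2, h3, Polynomial.mul_comp, charpoly_comp_neg_X, charpoly_comp_neg_X,
    hcard, neg_sub]
  have hsq : ((-1 : Polynomial ℝ) ^ m) * ((-1 : Polynomial ℝ) ^ m) = 1 := by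
    rw [← pow_add, ← two_mul, pow_mul]; norm_num
  linear_combination (-(((-1 : Polynomial ℝ) ^ m) * (-(A + B)).charpoly *
    (B - A).charpoly * (A + B).charpoly)) * hsq
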